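/- arXiv:math/0607053 — 2 statements merged into one kernel-verified Lean document; each statement's English description precedes it below -/
import Mathlib

section
/- Cartan's Lemma: Let V be a finite-dimensional real vector space and let θ¹, …, θⁿ be linearly independent linear functionals on V. If ω₁, …, ωₙ are linear functionals on V such that ∑ᵢ ωᵢ ∧ θⁱ = 0 (as an alternating 2-form), then there exist real numbers h_{ij} with h_{ij} = h_{ji} such that ωᵢ = ∑ⱼ h_{ij} θʲ for all i. -/
/-- If `θ` is a linearly independent family of functionals on a
finite-dimensional real vector space, there is a dual family of vectors. -/
lemma exists_dual_vectors {V : Type*} [AddCommGroup V] [Module ℝ V]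
    [FiniteDimensional ℝ V] {n : ℕ} (θ : Fin n → (V →ₗ[ℝ] ℝ))
    (hθ : LinearIndependent ℝ θ) :
    ∃ e : Fin n → V, ∀ i j, θ i (e j) = if i = j then 1 else 0 := by
  set Φ : V →ₗ[ℝ] (Fin n → ℝ) := LinearMap.pi θ with hΦ
  have hsurj : Function.Surjective Φ := by
    rw [← LinearMap.range_eq_top]
    by_contra hr
    obtain ⟨φ, φne, hφ⟩ :=
      Submodule.exists_dual_map_eq_bot_of_lt_top (lt_top_iff_ne_top.2 hr)
        inferInstance
    have hker : ∀ v : V, φ (Φ v) = 0 := by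
      intro v
      have : φ (Φ v) ∈ (LinearMap.range Φ).map φ :=
        Submodule.mem_map_of_mem (LinearMap.mem_range_self Φ v)
      rwa [hφ, Submodule.mem_bot] at this
    set c : Fin n → ℝ := fun i => φ (Pi.single i 1) with hc
    have hφx : ∀ x : Fin n → ℝ, φ x = ∑ i, x i * c i := by
      intro x
      have hx : x = ∑ i, x i • (Pi.single i 1 : Fin n → ℝ) := by
        ext j; simp [Pi.single_apply]
      conv_lhs => rw [hx]
      simp [hc, Finset.mul_sum, smul_eq_mul]
    have hc0 : ∀ i, c i = 0 := by
      have hsum : ∑ i, c i • θ i = 0 := by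
        ext v
        have := hker v
        rw [hφx (Φ v)] at this
        simpa [hΦ, LinearMap.pi_apply, mul_comm] using this
      exact fun i => Fintype.linearIndependent_iff.1 hθ c hsum i
    exact φne (LinearMap.ext fun x => by rw [hφx x]; simp [hc0])
  refine ⟨fun j => (hsurj (Pi.single j 1 : Fin n → ℝ)).choose, fun i j => ?_⟩
  have := (hsurj (Pi.single j 1 : Fin n → ℝ)).choose_spec
  have h2 : Φ ((hsurj (Pi.single j 1 : Fin n → ℝ)).choose) i
      = (Pi.single j 1 : Fin n → ℝ) i := by
    rw [this]
  simpa [hΦ, LinearMap.pi_apply, Pi.single_apply, eq_comm] using h2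

/-- Cartan's Lemma: if `θ 0, …, θ (n-1)` are linearly independent linear
functionals on a finite-dimensional real vector space `V` and `ω 0, …, ω (n-1)`
are linear functionals with `∑ i, ω i ∧ θ i = 0` (as an alternating 2-form),
then `ω i = ∑ j, h i j • θ j` for some symmetric matrix `h i j`. -/
theorem stmt_1 {V : Type*} [AddCommGroup V] [Module ℝ V] [FiniteDimensional ℝ V]
    {n : ℕ} (θ ω : Fin n → (V →ₗ[ℝ] ℝ))
    (hθ : LinearIndependent ℝ θ)
    (hwedge : ∀ v w : V, ∑ i, (ω i v * θ i w - ω i w * θ i v) = 0) :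
    ∃ h : Fin n → Fin n → ℝ, (∀ i j, h i j = h j i) ∧
      ∀ i, ω i = ∑ j, h i j • θ j := by
  obtain ⟨e, he⟩ := exists_dual_vectors θ hθ
  have hsym : ∀ i j, ω i (e j) = ω j (e i) := by
    intro i j
    have h0 := hwedge (e j) (e i)
    have h1 : ∑ k, (ω k (e j) * θ k (e i) - ω k (e i) * θ k (e j))
        = ω i (e j) - ω j (e i) := by
      rw [Finset.sum_sub_distrib]
      congr 1
      · rw [Finset.sum_eq_single i] <;> simp +contextual [he]
      · rw [Finset.sum_eq_single j] <;> simp +contextual [he]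
    rw [h1] at h0
    linarith
  refine ⟨fun i j => ω i (e j), hsym, fun i => ?_⟩
  ext v
  have h0 := hwedge v (e i)
  have h1 : ∑ k, (ω k v * θ k (e i) - ω k (e i) * θ k v)
      = ω i v - ∑ k, ω k (e i) * θ k v := by
    rw [Finset.sum_sub_distrib]
    congr 1
    rw [Finset.sum_eq_single i] <;> simp +contextual [he]
  rw [h1, sub_eq_zero] at h0
  rw [h0]
  simp only [LinearMap.coe_sum, Finset.sum_apply, LinearMap.smul_apply, smul_eq_mul]
  exact Finset.sum_congr rfl fun k _ => by rw [hsym i k]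
end

section
/- Pointwise version of uniqueness of connection coefficients: let θ¹,…,θⁿ be a basis of the dual of an n-dimensional real vector space V and suppose (aⱼⁱ) and (bⱼⁱ) are families of linear functionals on V with aᵢʲ = −aⱼⁱ, bᵢʲ = −bⱼⁱ, and ∑ⱼ θʲ ∧ aⱼⁱ = ∑ⱼ θʲ ∧ bⱼⁱ for every i. Then aⱼⁱ = bⱼⁱ for all i, j. -/
/-!
Evaluate everything on the basis `e` of `V` dual to `θ`. The wedge identity says that the
coefficients `c p i (e q)` of `c = a - b` are symmetric in `p, q`, while `c` is antisymmetric in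
`p, i`. Alternating the two symmetries six times carries `c p i (e q)` to `-c p i (e q)`.
-/

open Module

theorem eq_zero_of_antisymm_of_symm {ι G : Type*} [AddGroup G] [IsAddTorsionFree G]
    (f : ι → ι → ι → G) (hanti : ∀ p i q, f p i q = -f i p q)
    (hsym : ∀ p i q, f p i q = f q i p) (p i q : ι) : f p i q = 0 := by
  refine self_eq_neg.mp ?_
  calc f p i q = f q i p := hsym p i q
    _ = -f i q p := hanti q i p
    _ = -f p q i := by rw [hsym i q p]
    _ = f q p i := by rw [hanti q p i]
    _ = f i p q := hsym q p i
    _ = -f p i q := hanti i p q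

theorem Module.Basis.exists_dualBasis_eq {ι K V : Type*} [DecidableEq ι] [Finite ι] [Field K]
    [AddCommGroup V] [Module K V] (B : Basis ι K (Dual K V)) :
    ∃ e : Basis ι K V, ⇑e.dualBasis = ⇑B := by
  have : FiniteDimensional K V := (finite_dual_iff K).mp (.of_basis B)
  let e := B.dualBasis.map (evalEquiv K V).symm
  refine ⟨e, funext fun i => e.ext fun j => ?_⟩
  have he : evalEquiv K V (e j) = B.dualBasis j := by simp [e]
  rw [e.dualBasis_apply_self, ← Dual.eval_apply, ← evalEquiv_apply, he, B.dualBasis_apply_self]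
  simp [eq_comm]

namespace Module.Basis

variable {ι R M : Type*} [Fintype ι] [DecidableEq ι] [CommRing R] [AddCommGroup M] [Module R M]

theorem apply_comm_of_sum_dualBasis_wedge_eq_zero (e : Basis ι R M) (c : ι → ι → Dual R M) (i : ι)
    (hc : ∀ v w, ∑ j, (e.dualBasis j v * c j i w - e.dualBasis j w * c j i v) = 0) (p q : ι) :
    c p i (e q) = c q i (e p) := by
  have h := hc (e p) (e q)
  simp only [dualBasis_apply_self, Finset.sum_sub_distrib, ite_mul, one_mul, zero_mul,
    Finset.sum_ite_eq, Finset.mem_univ, if_true] at h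
  exact sub_eq_zero.mp h

theorem eq_of_sum_dualBasis_wedge_eq [IsAddTorsionFree R] (e : Basis ι R M)
    (a b : ι → ι → Dual R M) (ha : ∀ i j, a i j = -a j i) (hb : ∀ i j, b i j = -b j i)
    (hwedge : ∀ i, ∀ v w : M,
      ∑ j, (e.dualBasis j v * a j i w - e.dualBasis j w * a j i v)
        = ∑ j, (e.dualBasis j v * b j i w - e.dualBasis j w * b j i v))
    (i j : ι) : a j i = b j i := by
  have hsym : ∀ p i q, (a p i - b p i) (e q) = (a q i - b q i) (e p) := by
    refine fun p i q => e.apply_comm_of_sum_dualBasis_wedge_eq_zero (a - b) i (fun v w => ?_) p q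
    simp only [Pi.sub_apply, LinearMap.sub_apply, mul_sub]
    rw [← sub_eq_zero.mpr (hwedge i v w), ← Finset.sum_sub_distrib]
    exact Finset.sum_congr rfl fun _ _ => by ring
  have hanti : ∀ p i q, (a p i - b p i) (e q) = -(a i p - b i p) (e q) := by
    intro p i q
    rw [ha p i, hb p i]
    simp only [LinearMap.sub_apply, neg_sub_neg, neg_sub]
  refine sub_eq_zero.mp (e.ext fun k => ?_)
  exact eq_zero_of_antisymm_of_symm (fun p i q => (a p i - b p i) (e q)) hanti hsym j i k

end Module.Basis

theorem stmt_4_general {V : Type*} [AddCommGroup V] [Module ℝ V]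
    {n : ℕ}
    (θ : Fin n → (V →ₗ[ℝ] ℝ))
    (hθ : LinearIndependent ℝ θ)
    (hspan : ⊤ ≤ Submodule.span ℝ (Set.range θ))
    (a b : Fin n → Fin n → (V →ₗ[ℝ] ℝ))
    (ha : ∀ i j, a i j = - a j i) (hb : ∀ i j, b i j = - b j i)
    (hwedge : ∀ i, ∀ v w : V,
      ∑ j, (θ j v * a j i w - θ j w * a j i v)
        = ∑ j, (θ j v * b j i w - θ j w * b j i v)) :
    ∀ i j, a j i = b j i := by
  obtain ⟨e, he⟩ := (Basis.mk hθ hspan).exists_dualBasis_eq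
  rw [Basis.coe_mk] at he
  subst he
  exact e.eq_of_sum_dualBasis_wedge_eq a b ha hb hwedge

/-- Pointwise uniqueness of connection coefficients: if `θ` is a basis of the
dual of an `n`-dimensional real vector space `V`, and `a j i`, `b j i` are
antisymmetric families of linear functionals with
`∑ j, θ j ∧ a j i = ∑ j, θ j ∧ b j i` for every `i`, then `a = b`. -/
theorem stmt_4 {V : Type*} [AddCommGroup V] [Module ℝ V]
    {n : ℕ} (hdim : Module.finrank ℝ V = n)
    (θ : Fin n → (V →ₗ[ℝ] ℝ))
    (hθ : LinearIndependent ℝ θ)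
    (hspan : ⊤ ≤ Submodule.span ℝ (Set.range θ))
    (a b : Fin n → Fin n → (V →ₗ[ℝ] ℝ))
    (ha : ∀ i j, a i j = - a j i) (hb : ∀ i j, b i j = - b j i)
    (hwedge : ∀ i, ∀ v w : V,
      ∑ j, (θ j v * a j i w - θ j w * a j i v)
        = ∑ j, (θ j v * b j i w - θ j w * b j i v)) :
    ∀ i j, a j i = b j i :=
  stmt_4_general θ hθ hspan a b ha hb hwedge
end
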